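/- Let x, y ∈ ℝ and c ∈ [-1,1] with x² + y² + xy - x - y = 0. Define A = (1 - x - y + xc)/2 and D = (1 + 2yc + y² - x²(1-c²))/4, and suppose D ≥ 0 and |A + √D| ≤ 1. Then with cos ω = A + √D and cos η = A - √D, the quartic z⁴ - 2(1-x-y+xc)z³ - ((4y - 2y²)c + 2y² - 2)z² - 2(1-x-y+xc)z + 1 factors as (z² - 2z cos ω + 1)(z² - 2z cos η + 1). -/

import Mathlib

theorem palindromic_quartic_eq_mul {R : Type*} [CommRing R] {a b s q : R}
    (hsum : a + b = s) (hprod : 4 * (a * b) = -q - 2) (z : R) :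
    z^4 - 2*s*z^3 - q*z^2 - 2*s*z + 1 = (z^2 - 2*z*a + 1) * (z^2 - 2*z*b + 1) := by
  subst hsum
  linear_combination -z^2 * hprod

theorem stmt_17_general (x y c : ℝ)
    (hxy : x^2 + y^2 + x*y - x - y = 0)
    (A D : ℝ) (hA : A = (1 - x - y + x*c)/2)
    (hD : D = (1 + 2*y*c + y^2 - x^2*(1 - c^2))/4)
    (hDpos : 0 ≤ D)
    (ω η : ℝ) (hω : Real.cos ω = A + Real.sqrt D) (hη : Real.cos η = A - Real.sqrt D) :
    ∀ z : ℂ,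
      z^4 - 2*((1 - x - y + x*c : ℝ) : ℂ)*z^3
        - (((4*y - 2*y^2)*c + 2*y^2 - 2 : ℝ) : ℂ)*z^2
        - 2*((1 - x - y + x*c : ℝ) : ℂ)*z + 1
      = (z^2 - 2*z*((Real.cos ω : ℝ) : ℂ) + 1) * (z^2 - 2*z*((Real.cos η : ℝ) : ℂ) + 1) := by
  have hsum : Real.cos ω + Real.cos η = 1 - x - y + x*c := by
    rw [hω, hη, hA]; ring
  have hprod : 4 * (Real.cos ω * Real.cos η) = -((4*y - 2*y^2)*c + 2*y^2 - 2) - 2 := by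
    rw [hω, hη, hA]
    linear_combination (2 - 2*c) * hxy - 4 * Real.sq_sqrt hDpos - 4 * hD
  exact palindromic_quartic_eq_mul (by exact_mod_cast hsum) (by exact_mod_cast hprod)

theorem stmt_17 (x y c : ℝ) (hc : -1 ≤ c) (hc' : c ≤ 1)
    (hxy : x^2 + y^2 + x*y - x - y = 0)
    (A D : ℝ) (hA : A = (1 - x - y + x*c)/2)
    (hD : D = (1 + 2*y*c + y^2 - x^2*(1 - c^2))/4)
    (hDpos : 0 ≤ D) (hbound : |A + Real.sqrt D| ≤ 1)
    (ω η : ℝ) (hω : Real.cos ω = A + Real.sqrt D) (hη : Real.cos η = A - Real.sqrt D) :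
    ∀ z : ℂ,
      z^4 - 2*((1 - x - y + x*c : ℝ) : ℂ)*z^3
        - (((4*y - 2*y^2)*c + 2*y^2 - 2 : ℝ) : ℂ)*z^2
        - 2*((1 - x - y + x*c : ℝ) : ℂ)*z + 1
      = (z^2 - 2*z*((Real.cos ω : ℝ) : ℂ) + 1) * (z^2 - 2*z*((Real.cos η : ℝ) : ℂ) + 1) :=
  stmt_17_general x y c hxy A D hA hD hDpos ω η hω hη
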